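/- Under the Markovian grand coupling of IDLA processes (all started from different initial sets but driven by the same i.i.d. walks), for every t ∈ ℕ and all subsets A ⊆ B ⊆ V: (i) S_t^A ⊆ S_t^B (monotonicity), and (ii) |S_{t+1}^B| − |S_{t+1}^A| ≤ |S_t^B| − |S_t^A| (concavity). -/
import Mathlib


open scoped ENNReal BigOperators
open Filter Asymptotics

namespace ARW

variable {V : Type} [Fintype V] [DecidableEq V]

/-- A sub-stochastic matrix: every row sums to at most `1`. -/
def SubStochastic (K : V → V → ℝ≥0∞) : Prop := ∀ x, ∑ y, K x y ≤ 1

/-- Non-degenerate: no principal sub-matrix of `K` is stochastic. -/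
def NonDegenerate (K : V → V → ℝ≥0∞) : Prop :=
  ∀ S : Finset V, S.Nonempty → ∃ x ∈ S, ∑ y ∈ S, K x y ≠ 1

/-- A probability vector on `V`. -/
def IsProbVec (ν : V → ℝ≥0∞) : Prop := ∑ x, ν x = 1

/-- Probability that the `K`-walk currently at `x` next follows the trajectory `xs`
and is then killed. -/
noncomputable def pathProb (K : V → V → ℝ≥0∞) : V → List V → ℝ≥0∞
  | x, [] => 1 - ∑ y, K x y
  | x, y :: ys => K x y * pathProb K y ys

/-- Probability that a `(K,ν)`-walk has the (finite) full trajectory `w`. -/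
noncomputable def walkProb (K : V → V → ℝ≥0∞) (ν : V → ℝ≥0∞) : List V → ℝ≥0∞
  | [] => 0
  | x :: xs => ν x * pathProb K x xs

/-- `p(x)`: the probability that a `(K,ν)`-walk visits `x` before dying. -/
noncomputable def hitProb (K : V → V → ℝ≥0∞) (ν : V → ℝ≥0∞) (x : V) : ℝ≥0∞ :=
  ∑' w : List V, if x ∈ w then walkProb K ν w else 0

/-- The insertion law `ν` is admissible when every site has a chance of being
visited by a `(K,ν)`-walk. -/
def Admissible (K : V → V → ℝ≥0∞) (ν : V → ℝ≥0∞) : Prop := ∀ x, 0 < hitProb K ν x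

/-- The uniform law on `V`. -/
noncomputable def unifLaw (V : Type) [Fintype V] : V → ℝ≥0∞ :=
  fun _ => (Fintype.card V : ℝ≥0∞)⁻¹

/-! ### IDLA -/

/-- The IDLA update: the walker settles at the first site of its trajectory
which is not already occupied. -/
def idlaUpdate (S : Finset V) : List V → Finset V
  | [] => S
  | x :: xs => if x ∈ S then idlaUpdate S xs else insert x S

/-- The IDLA aggregate obtained from the initial set `A` after using the walks `ws`. -/
def idlaSet (A : Finset V) (ws : List (List V)) : Finset V := ws.foldl idlaUpdate A

/-- `P(T^A > t)`: probability that the IDLA process started from `A` and driven by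
i.i.d. `(K,ν)`-walks has not filled `V` after `t` steps. -/
noncomputable def idlaTail (K : V → V → ℝ≥0∞) (ν : V → ℝ≥0∞) (A : Finset V) (t : ℕ) : ℝ≥0∞ :=
  ∑' ws : Fin t → List V,
    (∏ i, walkProb K ν (ws i)) * (if idlaSet A (List.ofFn ws) = Finset.univ then 0 else 1)

/-- `E[T^A]`: the expected filling time of IDLA started from `A`. -/
noncomputable def idlaMean (K : V → V → ℝ≥0∞) (ν : V → ℝ≥0∞) (A : Finset V) : ℝ≥0∞ :=
  ∑' t : ℕ, idlaTail K ν A t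

/-- `Var(T^A)`: the variance of the filling time of IDLA started from `A`. -/
noncomputable def idlaVar (K : V → V → ℝ≥0∞) (ν : V → ℝ≥0∞) (A : Finset V) : ℝ≥0∞ :=
  (∑' t : ℕ, (2 * t + 1) * idlaTail K ν A t) - (idlaMean K ν A) ^ 2

/-! ### The ARW chain -/

/-- The state of a single site: empty, one sleeping particle, or `n+1` active particles. -/
inductive Site : Type
  | empty : Site
  | sleeping : Site
  | active (n : ℕ) : Site
deriving DecidableEq

/-- A configuration of particles. -/
abbrev Conf (V : Type) := V → Site

def Site.isActive : Site → Bool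
  | .active _ => true
  | _ => false

/-- The set of sites holding at least one active particle. -/
def activeSites (η : Conf V) : Finset V := Finset.univ.filter fun x => (η x).isActive

/-- Adding one active particle to a site (waking a sleeping particle if present). -/
def Site.addActive : Site → Site
  | .empty => .active 0
  | .sleeping => .active 1
  | .active n => .active (n + 1)

/-- Removing one active particle from a site. -/
def Site.removeOne : Site → Site
  | .active (n + 1) => .active n
  | _ => .empty

/-- Adding one active particle at site `y`. -/
def addActiveAt (η : Conf V) (y : V) : Conf V := Function.update η y (η y).addActive

/-- One sequential toppling step of ARW stabilization with sleep rate `lam`: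
an active site `x` is selected (if any); if its particle is alone it falls asleep
with probability `lam/(1+lam)`, moves to `y` with probability `K x y/(1+lam)` and
dies with the remaining probability; if it is not alone it moves to `y` with
probability `K x y` and dies with the remaining probability.  Stable
configurations are absorbing. -/
noncomputable def toppleKernel (K : V → V → ℝ≥0∞) (lam : ℝ) (η ξ : Conf V) : ℝ≥0∞ :=
  if h : (activeSites η).Nonempty then
    let x := h.choose
    let ημ : Conf V := Function.update η x (η x).removeOne
    let move : ℝ≥0∞ := ∑ y, if ξ = addActiveAt ημ y then K x y else 0
    let die : ℝ≥0∞ := if ξ = ημ then 1 - ∑ y, K x y else 0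
    if η x = Site.active 0 then
      ((if ξ = Function.update η x Site.sleeping then ENNReal.ofReal lam else 0) + move + die)
        / (ENNReal.ofReal lam + 1)
    else move + die
  else if ξ = η then 1 else 0

/-- Iterates of a sub-probability kernel on configurations. -/
noncomputable def kernelPow (M : Conf V → Conf V → ℝ≥0∞) : ℕ → Conf V → Conf V → ℝ≥0∞
  | 0 => fun η ξ => if ξ = η then 1 else 0
  | t + 1 => fun η ξ => ∑' σ : Conf V, M η σ * kernelPow M t σ ξ

/-- A stable configuration, seen as a configuration (`true` = sleeping particle). -/
def embed (b : V → Bool) : Conf V := fun x => if b x then Site.sleeping else Site.empty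

/-- One step of the `ARW(K,lam,ν)` chain: insert an active particle at a `ν`-distributed
site and stabilize; `arwStep K lam ν η ξ` is the probability of reaching the stable
configuration `ξ` from the stable configuration `η`. -/
noncomputable def arwStep (K : V → V → ℝ≥0∞) (lam : ℝ) (ν : V → ℝ≥0∞)
    (η ξ : V → Bool) : ℝ≥0∞ :=
  ∑ x, ν x * ⨆ t, kernelPow (toppleKernel K lam) t (addActiveAt (embed η) x) (embed ξ)

/-- The transition matrix of the `ARW(K,lam,ν)` chain on stable configurations. -/
noncomputable def arwMatrix (K : V → V → ℝ≥0∞) (lam : ℝ) (ν : V → ℝ≥0∞) :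
    Matrix (V → Bool) (V → Bool) ℝ :=
  Matrix.of fun η ξ => (arwStep K lam ν η ξ).toReal

/-! ### Distances to equilibrium, mixing and relaxation times -/

variable {S : Type} [Fintype S] [DecidableEq S]

/-- `π` is a stationary probability distribution for `P`. -/
def IsStationary (P : Matrix S S ℝ) (π : S → ℝ) : Prop :=
  (∀ s, 0 ≤ π s) ∧ (∑ s, π s = 1) ∧ ∀ s, ∑ r, π r * P r s = π s

/-- The separation distance to equilibrium at time `t`. -/
noncomputable def sepDist (P : Matrix S S ℝ) (π : S → ℝ) (t : ℕ) : ℝ :=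
  ⨆ η, ⨆ ξ, (1 - (P ^ t) η ξ / π ξ)

/-- The separation mixing time with precision `ε`. -/
noncomputable def sepMix (P : Matrix S S ℝ) (π : S → ℝ) (ε : ℝ) : ℕ :=
  sInf {t : ℕ | sepDist P π t ≤ ε}

/-- The total-variation distance to equilibrium at time `t`. -/
noncomputable def tvDist (P : Matrix S S ℝ) (π : S → ℝ) (t : ℕ) : ℝ :=
  ⨆ η, ⨆ A : Finset S, |∑ ξ ∈ A, ((P ^ t) η ξ - π ξ)|

/-- The total-variation mixing time with precision `ε`. -/
noncomputable def tvMix (P : Matrix S S ℝ) (π : S → ℝ) (ε : ℝ) : ℕ :=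
  sInf {t : ℕ | tvDist P π t ≤ ε}

/-- The relaxation time `1/(1-ρ)`, where `ρ` is the largest modulus of the
(complex) eigenvalues of `P` other than `1`. -/
noncomputable def relTime (P : Matrix S S ℝ) : ℝ :=
  (1 - sSup {r : ℝ | ∃ z : ℂ,
      z ≠ 1 ∧ (P.map (fun a : ℝ => (a : ℂ))).charpoly.IsRoot z ∧ r = ‖z‖})⁻¹

/-- Separation (or total-variation) cutoff for a sequence of chains with distance
functions `d n` and mixing times `ts n`. -/
def HasCutoff (d : ℕ → ℕ → ℝ) (ts : ℕ → ℕ) : Prop :=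
  ∀ α : ℝ, 0 ≤ α →
    (α < 1 → Tendsto (fun n => d n ⌊α * (ts n : ℝ)⌋₊) atTop (nhds 1)) ∧
    (1 < α → Tendsto (fun n => d n ⌊α * (ts n : ℝ)⌋₊) atTop (nhds 0))

end ARW
namespace ARW

lemma subset_idlaUpdate {V : Type} [DecidableEq V] (S : Finset V) (w : List V) :
    S ⊆ idlaUpdate S w := by
  induction w generalizing S with
  | nil => exact Finset.Subset.refl _
  | cons x xs ih =>
    simp only [idlaUpdate]
    split
    · exact ih S
    · exact Finset.subset_insert _ _

lemma idlaUpdate_mono {V : Type} [DecidableEq V] {A B : Finset V} (hAB : A ⊆ B)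
    (w : List V) : idlaUpdate A w ⊆ idlaUpdate B w := by
  induction w generalizing A B with
  | nil => exact hAB
  | cons x xs ih =>
    simp only [idlaUpdate]
    by_cases hA : x ∈ A
    · rw [if_pos hA, if_pos (hAB hA)]
      exact ih hAB
    · rw [if_neg hA]
      by_cases hB : x ∈ B
      · rw [if_pos hB]
        exact Finset.insert_subset ((subset_idlaUpdate B xs) hB)
          (hAB.trans (subset_idlaUpdate B xs))
      · rw [if_neg hB]
        exact Finset.insert_subset_insert x hAB

lemma idlaUpdate_card_le {V : Type} [DecidableEq V] (S : Finset V) (w : List V) :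
    (idlaUpdate S w).card ≤ S.card + 1 := by
  induction w generalizing S with
  | nil => simp [idlaUpdate]
  | cons x xs ih =>
    simp only [idlaUpdate]
    split
    · exact ih S
    · exact (Finset.card_insert_le _ _)

lemma idlaUpdate_card_concave {V : Type} [DecidableEq V] {A B : Finset V} (hAB : A ⊆ B)
    (w : List V) :
    (idlaUpdate B w).card + A.card ≤ (idlaUpdate A w).card + B.card := by
  induction w generalizing A B with
  | nil => simp [idlaUpdate]; omega
  | cons x xs ih =>
    simp only [idlaUpdate]
    by_cases hA : x ∈ A
    · rw [if_pos hA, if_pos (hAB hA)]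
      exact ih hAB
    · rw [if_neg hA]
      by_cases hB : x ∈ B
      · rw [if_pos hB, Finset.card_insert_of_notMem hA]
        have := idlaUpdate_card_le B xs
        omega
      · rw [if_neg hB, Finset.card_insert_of_notMem hA,
          Finset.card_insert_of_notMem hB]
        have := ih hAB
        omega

lemma idlaSet_mono {V : Type} [DecidableEq V] {A B : Finset V} (hAB : A ⊆ B)
    (ws : List (List V)) : idlaSet A ws ⊆ idlaSet B ws := by
  induction ws generalizing A B with
  | nil => exact hAB
  | cons w ws ih => exact ih (idlaUpdate_mono hAB w)

/-- **Lemma (Monotonicity and concavity of IDLA).**  Under the Markovian grand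
coupling (all IDLA processes driven by the same walks `Ws`), for every `t` and all
`A ⊆ B ⊆ V`: (i) `S_t^A ⊆ S_t^B`, and (ii) `|S_{t+1}^B| − |S_{t+1}^A| ≤ |S_t^B| − |S_t^A|`. -/
theorem idla_monotone_and_concave
    {V : Type} [Fintype V] [DecidableEq V]
    (Ws : ℕ → List V) (t : ℕ) (A B : Finset V) (hAB : A ⊆ B) :
    idlaSet A (List.ofFn fun i : Fin t => Ws i.val)
        ⊆ idlaSet B (List.ofFn fun i : Fin t => Ws i.val)
    ∧ ((idlaSet B (List.ofFn fun i : Fin (t + 1) => Ws i.val)).card : ℤ)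
          - ((idlaSet A (List.ofFn fun i : Fin (t + 1) => Ws i.val)).card : ℤ)
        ≤ ((idlaSet B (List.ofFn fun i : Fin t => Ws i.val)).card : ℤ)
          - ((idlaSet A (List.ofFn fun i : Fin t => Ws i.val)).card : ℤ) := by
  have hofn : (List.ofFn fun i : Fin (t + 1) => Ws i.val)
      = (List.ofFn fun i : Fin t => Ws i.val) ++ [Ws t] := by
    rw [List.ofFn_succ']
    simp [List.concat_eq_append, Fin.castSucc, Fin.last]
  have hset : ∀ C : Finset V, idlaSet C (List.ofFn fun i : Fin (t + 1) => Ws i.val)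
      = idlaUpdate (idlaSet C (List.ofFn fun i : Fin t => Ws i.val)) (Ws t) := by
    intro C
    rw [hofn]
    simp [idlaSet, List.foldl_append]
  refine ⟨idlaSet_mono hAB _, ?_⟩
  rw [hset A, hset B]
  have := idlaUpdate_card_concave (idlaSet_mono hAB (List.ofFn fun i : Fin t => Ws i.val)) (Ws t)
  omega

end ARW
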